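/- Aggregated visit-probability bound for fixed-length options (deterministic core of Lemma 16 adapted to MDPs with fixed-length options): Let I be a finite set with |I| = M ≥ 1, let K ≥ 1 and N ≥ 1, and let w : {1,…,K} × {1,…,N} × I → ℝ satisfy 0 ≤ w(k,n,i) ≤ 1 and ∑_{i∈I} w(k,n,i) = 1 for every k and n. For each n, i set N_k(n,i) = ∑_{j=1}^{k} w(j,n,i) (with N₀(n,i) = 0). Then ∑_{k=1}^{K} ∑_{n=1}^{N} ∑_{i∈I} w(k,n,i) / √(max(1, N_{k−1}(n,i))) ≤ N·(2M + 3·√(M·K)). -/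
import Mathlib


open Finset

private lemma step_ineq (A b : ℝ) (hA : 0 ≤ A) (hb0 : 0 ≤ b) (hb1 : b ≤ 1) :
    min A 2 + 3 * (Real.sqrt (max 1 A) - 1) + b / Real.sqrt (max 1 A)
      ≤ min (A + b) 2 + 3 * (Real.sqrt (max 1 (A + b)) - 1) := by
  rcases le_or_gt A 1 with h | h
  · rw [max_eq_left h, Real.sqrt_one, div_one]
    have h1 : (1 : ℝ) ≤ Real.sqrt (max 1 (A + b)) := by
      have := Real.sqrt_le_sqrt (le_max_left 1 (A + b))
      rwa [Real.sqrt_one] at this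
    have hm1 : min A 2 = A := min_eq_left (by linarith)
    have hm2 : min (A + b) 2 = A + b := min_eq_left (by linarith)
    rw [hm1, hm2]; linarith
  · have h1 : max 1 A = A := max_eq_right h.le
    have h2 : max 1 (A + b) = A + b := max_eq_right (by linarith)
    rw [h1, h2]
    have hmin : min A 2 ≤ min (A + b) 2 := min_le_min (by linarith) le_rfl
    have hsA : Real.sqrt A ^ 2 = A := Real.sq_sqrt hA
    have hsB : Real.sqrt (A + b) ^ 2 = A + b := Real.sq_sqrt (by linarith)
    have hsA1 : (1 : ℝ) ≤ Real.sqrt A := by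
      have := Real.sqrt_le_sqrt h.le
      rwa [Real.sqrt_one] at this
    have hsAB : Real.sqrt A ≤ Real.sqrt (A + b) := Real.sqrt_le_sqrt (by linarith)
    have hkey : b / Real.sqrt A ≤ 3 * (Real.sqrt (A + b) - Real.sqrt A) := by
      rw [div_le_iff₀ (by linarith : (0:ℝ) < Real.sqrt A)]
      nlinarith [hsA, hsB, hsA1, hsAB]
    linarith

private lemma key_lemma (a : ℕ → ℝ) :
    ∀ K : ℕ, (∀ k ∈ Finset.Icc 1 K, 0 ≤ a k ∧ a k ≤ 1) →
    ∑ k ∈ Finset.Icc 1 K, a k / Real.sqrt (max 1 (∑ j ∈ Finset.Icc 1 (k - 1), a j))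
      ≤ min (∑ j ∈ Finset.Icc 1 K, a j) 2
        + 3 * (Real.sqrt (max 1 (∑ j ∈ Finset.Icc 1 K, a j)) - 1) := by
  intro K
  induction K with
  | zero => intro _; simp
  | succ K ih =>
    intro h
    have hsub : ∀ k ∈ Finset.Icc 1 K, 0 ≤ a k ∧ a k ≤ 1 := fun k hk =>
      h k (Finset.Icc_subset_Icc_right (Nat.le_succ K) hk)
    have hIH := ih hsub
    have hS0 : 0 ≤ ∑ j ∈ Finset.Icc 1 K, a j :=
      Finset.sum_nonneg fun j hj => (hsub j hj).1
    have hb := h (K + 1) (by simp)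
    rw [Finset.sum_Icc_succ_top (Nat.one_le_iff_ne_zero.mpr (Nat.succ_ne_zero K)),
        Finset.sum_Icc_succ_top (Nat.one_le_iff_ne_zero.mpr (Nat.succ_ne_zero K))]
    simp only [Nat.add_sub_cancel]
    calc _ ≤ (min (∑ j ∈ Finset.Icc 1 K, a j) 2
            + 3 * (Real.sqrt (max 1 (∑ j ∈ Finset.Icc 1 K, a j)) - 1))
            + a (K + 1) / Real.sqrt (max 1 (∑ j ∈ Finset.Icc 1 K, a j)) := by
            linarith
      _ ≤ _ := step_ineq _ _ hS0 hb.1 hb.2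

private lemma key_cor (a : ℕ → ℝ) (K : ℕ)
    (h : ∀ k ∈ Finset.Icc 1 K, 0 ≤ a k ∧ a k ≤ 1) :
    ∑ k ∈ Finset.Icc 1 K, a k / Real.sqrt (max 1 (∑ j ∈ Finset.Icc 1 (k - 1), a j))
      ≤ 2 + 3 * Real.sqrt (∑ j ∈ Finset.Icc 1 K, a j) := by
  have hS0 : 0 ≤ ∑ j ∈ Finset.Icc 1 K, a j :=
    Finset.sum_nonneg fun j hj => (h j hj).1
  have h1 := key_lemma a K h
  have h2 : min (∑ j ∈ Finset.Icc 1 K, a j) 2 ≤ 2 := min_le_right _ _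
  have h3 : Real.sqrt (max 1 (∑ j ∈ Finset.Icc 1 K, a j)) - 1
      ≤ Real.sqrt (∑ j ∈ Finset.Icc 1 K, a j) := by
    rcases le_or_gt (∑ j ∈ Finset.Icc 1 K, a j) 1 with hc | hc
    · rw [max_eq_left hc, Real.sqrt_one]
      have := Real.sqrt_nonneg (∑ j ∈ Finset.Icc 1 K, a j)
      linarith
    · rw [max_eq_right hc.le]
      have := Real.sqrt_nonneg (∑ j ∈ Finset.Icc 1 K, a j)
      linarith
  linarith

/-- **Aggregated visit-probability bound for fixed-length options** (deterministic
core of Lemma 16 of Zanette–Brunskill adapted to MDPs with fixed-length options).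
`I` is a finite set of `M ≥ 1` state–option pairs, `N` the number of decision steps
per episode, `w k n i` the probability of visiting pair `i` at decision step `n` in
episode `k` (summing to exactly `1` over `i`), and
`N_{k-1}(n,i) = ∑_{j=1}^{k-1} w j n i` the expected visit count before episode `k`. -/
theorem aggregated_visit_probability_bound_fixed_length_options
    {I : Type*} [Fintype I] [Nonempty I]
    (K N : ℕ) (hK : 1 ≤ K) (hN : 1 ≤ N)
    (w : ℕ → ℕ → I → ℝ)
    (hw01 : ∀ k ∈ Finset.Icc 1 K, ∀ n ∈ Finset.Icc 1 N, ∀ i,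
      0 ≤ w k n i ∧ w k n i ≤ 1)
    (hw1 : ∀ k ∈ Finset.Icc 1 K, ∀ n ∈ Finset.Icc 1 N, ∑ i, w k n i = 1) :
    ∑ k ∈ Finset.Icc 1 K, ∑ n ∈ Finset.Icc 1 N, ∑ i,
        w k n i / Real.sqrt (max 1 (∑ j ∈ Finset.Icc 1 (k - 1), w j n i))
      ≤ (N : ℝ) * (2 * (Fintype.card I : ℝ)
          + 3 * Real.sqrt ((Fintype.card I : ℝ) * (K : ℝ))) := by
  set M := (Fintype.card I : ℝ) with hM
  rw [Finset.sum_comm]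
  have hbound : ∀ n ∈ Finset.Icc 1 N,
      (∑ k ∈ Finset.Icc 1 K, ∑ i,
        w k n i / Real.sqrt (max 1 (∑ j ∈ Finset.Icc 1 (k - 1), w j n i)))
      ≤ 2 * M + 3 * Real.sqrt (M * K) := by
    intro n hn
    rw [Finset.sum_comm]
    have hperi : ∀ i : I,
        ∑ k ∈ Finset.Icc 1 K,
          w k n i / Real.sqrt (max 1 (∑ j ∈ Finset.Icc 1 (k - 1), w j n i))
        ≤ 2 + 3 * Real.sqrt (∑ j ∈ Finset.Icc 1 K, w j n i) := by
      intro i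
      exact key_cor (fun k => w k n i) K (fun k hk => hw01 k hk n hn i)
    calc (∑ i, ∑ k ∈ Finset.Icc 1 K,
          w k n i / Real.sqrt (max 1 (∑ j ∈ Finset.Icc 1 (k - 1), w j n i)))
        ≤ ∑ i, (2 + 3 * Real.sqrt (∑ j ∈ Finset.Icc 1 K, w j n i)) :=
          Finset.sum_le_sum fun i _ => hperi i
      _ = 2 * M + 3 * ∑ i, Real.sqrt (∑ j ∈ Finset.Icc 1 K, w j n i) := by
          rw [Finset.sum_add_distrib, ← Finset.mul_sum]
          simp [hM, mul_comm]
      _ ≤ 2 * M + 3 * Real.sqrt (M * K) := by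
          gcongr
          -- Cauchy-Schwarz: ∑ √x ≤ √(M ∑ x)
          have hx0 : ∀ i : I, 0 ≤ ∑ j ∈ Finset.Icc 1 K, w j n i := fun i =>
            Finset.sum_nonneg fun j hj => (hw01 j hj n hn i).1
          have hsum : ∑ i, ∑ j ∈ Finset.Icc 1 K, w j n i = K := by
            rw [Finset.sum_comm]
            rw [Finset.sum_congr rfl fun k hk => hw1 k hk n hn]
            simp
          have hcs := sq_sum_le_card_mul_sum_sq
            (s := Finset.univ) (f := fun i : I => Real.sqrt (∑ j ∈ Finset.Icc 1 K, w j n i))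
          have hsq : ∑ i, Real.sqrt (∑ j ∈ Finset.Icc 1 K, w j n i) ^ 2
              = (K : ℝ) := by
            rw [Finset.sum_congr rfl fun i _ => Real.sq_sqrt (hx0 i)]
            exact hsum
          rw [Real.le_sqrt (Finset.sum_nonneg fun i _ => Real.sqrt_nonneg _)]
          calc (∑ i, Real.sqrt (∑ j ∈ Finset.Icc 1 K, w j n i)) ^ 2
              ≤ (Finset.univ.card : ℝ) * ∑ i, Real.sqrt (∑ j ∈ Finset.Icc 1 K, w j n i) ^ 2 := hcs
            _ = M * K := by rw [hsq]; simp [hM]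
          positivity
  calc (∑ n ∈ Finset.Icc 1 N, ∑ k ∈ Finset.Icc 1 K, ∑ i,
        w k n i / Real.sqrt (max 1 (∑ j ∈ Finset.Icc 1 (k - 1), w j n i)))
      ≤ ∑ n ∈ Finset.Icc 1 N, (2 * M + 3 * Real.sqrt (M * K)) :=
        Finset.sum_le_sum hbound
    _ = (N : ℝ) * (2 * M + 3 * Real.sqrt (M * K)) := by
        rw [Finset.sum_const, Nat.card_Icc]
        simp only [Nat.add_sub_cancel, nsmul_eq_mul]
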